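/- Let Z be a proper geodesic δ-hyperbolic metric space, K ≥ 1, and {xₙ}, {yₙ} sequences in Z with lim xₙ = lim yₙ = ξ ∈ ∂Z. Suppose for each n, xₙ is joined to x₁ by a K-quasi-geodesic αₙ and yₙ is joined to y₁ by a K-quasi-geodesic βₙ. Then there is a constant D depending only on δ, d(x₁, y₁) and K, a subsequence {n_k}, and points p_{n_k} ∈ α_{n_k}, q_{n_k} ∈ β_{n_k} such that d(p_{n_k}, q_{n_k}) ≤ D and lim_{k→∞} p_{n_k} = lim_{k→∞} q_{n_k} = ξ. -/

import Mathlib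

/-!
Framework for proper geodesic Gromov hyperbolic metric spaces: geodesic
segments and rays, the Gromov boundary as equivalence classes of geodesic rays
from a basepoint (two rays being equivalent when they are at finite Hausdorff
distance), convergence of sequences to boundary points via uniform-on-compact
subconvergence of geodesics, and limit sets.
-/

noncomputable section

open Filter

namespace LIP

variable {Z : Type} [MetricSpace Z]

/-- The Gromov product `(x|y)_w`. -/
def gromovProd (x y w : Z) : ℝ := (dist x w + dist y w - dist x y) / 2

/-- Gromov's four-point condition: the space is `δ`-hyperbolic. -/
def DeltaHypSpace (Z : Type) [MetricSpace Z] (δ : ℝ) : Prop :=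
  ∀ x y z w : Z, min (gromovProd x y w) (gromovProd y z w) ≤ gromovProd x z w + δ

/-- `γ : ℝ → Z` is a geodesic from `b` to `y`, parametrised by arc length on
`[0, dist b y]` and extended constantly beyond `dist b y`. -/
def IsGeodSegTo (b y : Z) (γ : ℝ → Z) : Prop :=
  γ 0 = b ∧ (∀ t, dist b y ≤ t → γ t = y) ∧
    ∀ s t, 0 ≤ s → s ≤ dist b y → 0 ≤ t → t ≤ dist b y → dist (γ s) (γ t) = |s - t|

/-- A geodesic metric space: any two points are joined by a geodesic. -/
def IsGeodesicSpace (Z : Type) [MetricSpace Z] : Prop :=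
  ∀ x y : Z, ∃ γ : ℝ → Z, IsGeodSegTo x y γ

/-- A geodesic ray starting at `b` (only the values on `[0, ∞)` are relevant). -/
def IsRayFrom (b : Z) (ρ : ℝ → Z) : Prop :=
  ρ 0 = b ∧ ∀ s t : ℝ, 0 ≤ s → 0 ≤ t → dist (ρ s) (ρ t) = |s - t|

/-- The geodesic rays emanating from the basepoint `b`. -/
def RaysFrom (b : Z) := {ρ : ℝ → Z // IsRayFrom b ρ}

/-- Two rays are identified when they are at finite Hausdorff distance. -/
def rayClose (ρ₁ ρ₂ : ℝ → Z) : Prop :=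
  EMetric.hausdorffEdist (ρ₁ '' Set.Ici 0) (ρ₂ '' Set.Ici 0) ≠ ⊤

/-- The Gromov boundary of `Z` with respect to the basepoint `b`: equivalence classes
of geodesic rays from `b`, two rays being equivalent when they are at finite Hausdorff
distance. -/
def RBdry (b : Z) := Quot (fun ρ₁ ρ₂ : RaysFrom b => rayClose ρ₁.1 ρ₂.1)

/-- The class of the ray `ρ` as a boundary point, `ρ(∞)`. -/
def rayPt {b : Z} (ρ : RaysFrom b) : RBdry b := Quot.mk _ ρ

/-- Uniform convergence on compact subsets of `[0, ∞)` for a sequence of paths. -/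
def UCC (γ : ℕ → ℝ → Z) (α : ℝ → Z) : Prop :=
  ∀ M ε : ℝ, 0 < ε → ∃ N : ℕ, ∀ n ≥ N, ∀ t : ℝ, 0 ≤ t → t ≤ M → dist (γ n t) (α t) ≤ ε

/-- The sequence `u` converges to the boundary point `ξ ∈ ∂Z`: for any choice of
geodesics `γ n` from the basepoint `b` to `u n`, every subsequence has a further
subsequence converging uniformly on compact sets to a geodesic ray in the class `ξ`. -/
def SeqConvTo (b : Z) (u : ℕ → Z) (ξ : RBdry b) : Prop :=
  ∀ γ : ℕ → ℝ → Z, (∀ n, IsGeodSegTo b (u n) (γ n)) →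
    ∀ φ : ℕ → ℕ, StrictMono φ →
      ∃ ψ : ℕ → ℕ, StrictMono ψ ∧ ∃ ρ : RaysFrom b,
        UCC (fun k => γ (φ (ψ k))) ρ.1 ∧ rayPt ρ = ξ

/-- The limit set of a subset `A ⊆ Z` in `∂Z`. -/
def rLimitSet (b : Z) (A : Set Z) : Set (RBdry b) :=
  {ξ | ∃ u : ℕ → Z, (∀ n, u n ∈ A) ∧ SeqConvTo b u ξ}

/-- A ray `α` (not necessarily based at `b`) joins its origin to the boundary point
`ξ ∈ ∂Z` if it is at finite Hausdorff distance from some (hence any) ray in the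
class `ξ`. -/
def RayToBdryPt {b : Z} (α : ℝ → Z) (ξ : RBdry b) : Prop :=
  ∃ ρ : RaysFrom b, rayPt ρ = ξ ∧ rayClose α ρ.1

/-- Convergence of a sequence of boundary points: some representing rays converge
uniformly on compact sets. -/
def RBdConv {b : Z} (ξs : ℕ → RBdry b) (ξ : RBdry b) : Prop :=
  ∃ (ρs : ℕ → RaysFrom b) (ρ : RaysFrom b),
    (∀ n, rayPt (ρs n) = ξs n) ∧ rayPt ρ = ξ ∧ UCC (fun n => (ρs n).1) ρ.1

end LIP

namespace LIP

/-- A `K`-quasi-geodesic from `x` to `y`, defined on `[0, L]`. -/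
def IsQGeodSeg {Z : Type} [MetricSpace Z] (K : ℝ) (x y : Z) (L : ℝ) (γ : ℝ → Z) : Prop :=
  0 ≤ L ∧ γ 0 = x ∧ γ L = y ∧
    ∀ s t : ℝ, s ∈ Set.Icc 0 L → t ∈ Set.Icc 0 L →
      (1 / K) * |s - t| - K ≤ dist (γ s) (γ t) ∧ dist (γ s) (γ t) ≤ K * |s - t| + K

/-!
The geodesics `[b, u n]` and `[b, v n]` subconverge, uniformly on compacts, to rays `ρ` and
`ρ'` representing `ξ`; two such rays are `6δ`-close at equal times. Choose times `T k → ∞`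
beyond `u 0` and `v 0`, and a subsequence along which `[b, u n]` and `[b, v n]` are `1`-close
to `ρ` and `ρ'` at time `T k`. The point of `[b, u n]` at time `T k` is too far from `b` to be
near `[b, u 0]`, so by slimness it is near `[u 0, u n]`, hence by the Morse lemma near the
quasi-geodesic `γ n`; this gives `p k`, and `q k` likewise. Both points are then uniformly
close to `ρ (T k)`, resp. `ρ' (T k)`, hence to each other, and both sequences converge to `ξ`.

For the Morse lemma, let `w` be the point of `[x, y]` farthest from the integer samples of the
quasi-geodesic, at distance `D`. The samples near the points of `[x, y]` at distance `2D` from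
`w` are joined, avoiding the `D`-ball around `w`, by a `2K`-chain with `O(D)` steps, whereas
in a `δ`-hyperbolic space such a chain needs about `2 ^ (D / 3δ)` steps. Hence `D` is bounded.
-/

open Metric Topology
open scoped NNReal

section Geodesics

variable {Z : Type} [MetricSpace Z] {b y : Z} {γ ρ : ℝ → Z} {s t : ℝ}

lemma IsGeodSegTo.apply_dist (h : IsGeodSegTo b y γ) : γ (dist b y) = y :=
  h.2.1 _ le_rfl

lemma IsGeodSegTo.dist_apply_left (h : IsGeodSegTo b y γ) (h0 : 0 ≤ t) (h1 : t ≤ dist b y) :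
    dist b (γ t) = t := by
  rw [← h.1, h.2.2 0 t le_rfl dist_nonneg h0 h1, zero_sub, abs_neg, abs_of_nonneg h0]

lemma IsGeodSegTo.dist_apply_right (h : IsGeodSegTo b y γ) (h0 : 0 ≤ t) (h1 : t ≤ dist b y) :
    dist (γ t) y = dist b y - t := by
  conv_lhs => rw [← h.apply_dist]
  rw [h.2.2 t _ h0 h1 dist_nonneg le_rfl, abs_of_nonpos (by linarith)]
  ring

lemma IsGeodSegTo.dist_add_dist (h : IsGeodSegTo b y γ) (h0 : 0 ≤ t) (h1 : t ≤ dist b y) :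
    dist b (γ t) + dist (γ t) y = dist b y := by
  rw [h.dist_apply_left h0 h1, h.dist_apply_right h0 h1]
  ring

lemma IsGeodSegTo.dist_le (h : IsGeodSegTo b y γ) (hs : 0 ≤ s) (ht : 0 ≤ t) :
    dist (γ s) (γ t) ≤ |s - t| := by
  wlog hst : s ≤ t generalizing s t
  · rw [dist_comm, abs_sub_comm]
    exact this ht hs (le_of_not_ge hst)
  rcases le_or_gt t (dist b y) with hty | hty
  · rw [h.2.2 s t hs (hst.trans hty) ht hty]
  rw [h.2.1 t hty.le]
  rcases le_or_gt s (dist b y) with hsy | hsy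
  · rw [h.dist_apply_right hs hsy, abs_sub_comm, abs_of_nonneg (by linarith)]
    linarith
  · rw [h.2.1 s hsy.le, dist_self]
    exact abs_nonneg _

lemma IsGeodSegTo.dist_apply_apply (h : IsGeodSegTo b y γ) (hs : s ∈ Set.Icc 0 (dist b y))
    (ht : t ∈ Set.Icc 0 (dist b y)) : dist (γ s) (γ t) = |s - t| :=
  h.2.2 s t hs.1 hs.2 ht.1 ht.2

lemma IsGeodSegTo.dist_add_dist_of_le (h : IsGeodSegTo b y γ) {r : ℝ}
    (hr : r ∈ Set.Icc 0 (dist b y)) (hs : s ∈ Set.Icc 0 (dist b y))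
    (ht : t ∈ Set.Icc 0 (dist b y)) (hrs : r ≤ s) (hst : s ≤ t) :
    dist (γ r) (γ s) + dist (γ s) (γ t) = dist (γ r) (γ t) := by
  rw [h.dist_apply_apply hr hs, h.dist_apply_apply hs ht, h.dist_apply_apply hr ht,
    abs_of_nonpos (by linarith), abs_of_nonpos (by linarith), abs_of_nonpos (by linarith)]
  ring

lemma IsRayFrom.dist_apply (h : IsRayFrom b ρ) (ht : 0 ≤ t) : dist b (ρ t) = t := by
  rw [← h.1, h.2 0 t le_rfl ht, zero_sub, abs_neg, abs_of_nonneg ht]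

lemma IsRayFrom.isGeodSegTo (h : IsRayFrom b ρ) (ht : 0 ≤ t) :
    IsGeodSegTo b (ρ t) (fun r => ρ (min r t)) := by
  rw [IsGeodSegTo, h.dist_apply ht]
  refine ⟨by rw [min_eq_left ht, h.1], fun r hr => by rw [min_eq_right hr], ?_⟩
  intro r r' hr hrt hr' hr't
  rw [min_eq_left hrt, min_eq_left hr't]
  exact h.2 r r' hr hr'

end Geodesics

section Hyperbolicity

variable {Z : Type} [MetricSpace Z] {δ : ℝ}

lemma DeltaHypSpace.nonneg (hyp : DeltaHypSpace Z δ) (b : Z) : 0 ≤ δ := by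
  simpa [gromovProd] using hyp b b b b

lemma gromovProd_comm (x y w : Z) : gromovProd x y w = gromovProd y x w := by
  rw [gromovProd, gromovProd, dist_comm x y, add_comm (dist x w)]

/-- The witness is the point of `[x, z]` at distance `(w|z)_x` from `x`; the four-point
condition at `(x, γ r, z; w)` bounds its distance to `w`. -/
lemma DeltaHypSpace.exists_dist_le_gromovProd (hyp : DeltaHypSpace Z δ) {x z : Z}
    {γ : ℝ → Z} (hγ : IsGeodSegTo x z γ) (w : Z) :
    ∃ r ∈ Set.Icc 0 (dist x z), dist w (γ r) ≤ gromovProd x z w + 2 * δ := by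
  have t1 : dist w z ≤ dist w x + dist x z := dist_triangle _ _ _
  have t2 : dist w x ≤ dist w z + dist z x := dist_triangle _ _ _
  have e1 : dist x w = dist w x := dist_comm _ _
  have e2 : dist z w = dist w z := dist_comm _ _
  have e3 : dist z x = dist x z := dist_comm _ _
  obtain ⟨r, hr⟩ : ∃ r, r = (dist x w + dist x z - dist w z) / 2 := ⟨_, rfl⟩
  have hr0 : 0 ≤ r := by linarith
  have hr1 : r ≤ dist x z := by linarith
  refine ⟨r, ⟨hr0, hr1⟩, ?_⟩
  have h4 := hyp x (γ r) z w
  unfold gromovProd at h4 ⊢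
  rw [hγ.dist_apply_left hr0 hr1, hγ.dist_apply_right hr0 hr1, dist_comm (γ r) w,
    min_eq_left (by linarith)] at h4
  linarith

lemma DeltaHypSpace.slim_triangle (hyp : DeltaHypSpace Z δ) {x y z w : Z}
    (hw : dist x w + dist w y = dist x y) {γ₁ γ₂ : ℝ → Z}
    (h₁ : IsGeodSegTo x z γ₁) (h₂ : IsGeodSegTo y z γ₂) :
    (∃ r ∈ Set.Icc 0 (dist x z), dist w (γ₁ r) ≤ 3 * δ) ∨
      ∃ r ∈ Set.Icc 0 (dist y z), dist w (γ₂ r) ≤ 3 * δ := by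
  have hxy : gromovProd x y w = 0 := by
    rw [gromovProd, dist_comm y w]
    linarith
  have h4 := hyp x z y w
  rw [hxy, zero_add, gromovProd_comm z y] at h4
  rcases min_le_iff.mp h4 with hc | hc
  · obtain ⟨r, hr, hb⟩ := hyp.exists_dist_le_gromovProd h₁ w
    exact Or.inl ⟨r, hr, by linarith⟩
  · obtain ⟨r, hr, hb⟩ := hyp.exists_dist_le_gromovProd h₂ w
    exact Or.inr ⟨r, hr, by linarith⟩

end Hyperbolicity

section Chains

variable {Z : Type} [MetricSpace Z]

structure IsChain (c : ℝ) (P : Set Z) (Γ : ℕ → Z) (N : ℕ) (x y : Z) : Prop where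
  apply_zero : Γ 0 = x
  apply_last : Γ N = y
  dist_succ_le : ∀ j < N, dist (Γ j) (Γ (j + 1)) ≤ c
  mem : ∀ j ≤ N, Γ j ∈ P

variable {c : ℝ} {P : Set Z} {Γ Γ' : ℕ → Z} {N N' : ℕ} {x y z : Z}

lemma IsChain.take (h : IsChain c P Γ N x y) {n : ℕ} (hn : n ≤ N) :
    IsChain c P Γ n x (Γ n) :=
  ⟨h.apply_zero, rfl, fun j hj => h.dist_succ_le j (by omega), fun j hj => h.mem j (by omega)⟩

lemma IsChain.reverse (h : IsChain c P Γ N x y) : IsChain c P (fun j => Γ (N - j)) N y x where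
  apply_zero := by simpa using h.apply_last
  apply_last := by simpa using h.apply_zero
  dist_succ_le j hj := by
    rw [dist_comm, show N - j = N - (j + 1) + 1 by omega]
    exact h.dist_succ_le _ (by omega)
  mem j _ := h.mem _ (by omega)

lemma IsChain.append (h : IsChain c P Γ N x y) (h' : IsChain c P Γ' N' y z) :
    IsChain c P (fun j => if j ≤ N then Γ j else Γ' (j - N)) (N + N') x z where
  apply_zero := by simpa using h.apply_zero
  apply_last := by
    rcases Nat.eq_zero_or_pos N' with rfl | hN'
    · simp [h.apply_last, ← h'.apply_zero, h'.apply_last]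
    · simpa [show ¬ N + N' ≤ N by omega] using h'.apply_last
  dist_succ_le j hj := by
    by_cases hjN : j + 1 ≤ N
    · simpa [show j ≤ N by omega, hjN] using h.dist_succ_le j hjN
    by_cases hjN' : j = N
    · subst hjN'
      simpa [h.apply_last, ← h'.apply_zero] using h'.dist_succ_le 0 (by omega)
    · simpa [show ¬ j ≤ N by omega, hjN, show j + 1 - N = j - N + 1 by omega] using
        h'.dist_succ_le (j - N) (by omega)
  mem j hj := by
    by_cases hjN : j ≤ N
    · simpa [hjN] using h.mem j hjN
    · simpa [hjN] using h'.mem (j - N) (by omega)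

lemma isChain_of_isGeodSegTo {g : ℝ → Z} (hg : IsGeodSegTo x y g) (hc : 0 < c)
    (hP : closedBall x (dist x y) ⊆ P) :
    IsChain c P (fun j => g (min (j * c) (dist x y))) ⌈dist x y / c⌉₊ x y where
  apply_zero := by simpa using hg.1
  apply_last := by
    rw [min_eq_right ((div_le_iff₀ hc).mp (Nat.le_ceil _)), hg.apply_dist]
  dist_succ_le j _ := by
    have h0 : (0 : ℝ) ≤ j * c := by positivity
    refine (hg.dist_le (le_min h0 dist_nonneg) (le_min (by positivity) dist_nonneg)).trans ?_
    rw [abs_sub_comm, abs_of_nonneg (sub_nonneg.mpr (min_le_min_right _ (by push_cast; linarith)))]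
    push_cast
    rcases le_total ((j + 1) * c) (dist x y) with h | h
    · rw [min_eq_left h, min_eq_left (by linarith)]
      linarith
    · rw [min_eq_right h]
      rcases min_cases ((j : ℝ) * c) (dist x y) with ⟨h', _⟩ | ⟨h', _⟩ <;> rw [h'] <;> linarith
  mem j _ := by
    have h0 : 0 ≤ min (j * c) (dist x y) := le_min (by positivity) dist_nonneg
    apply hP
    rw [mem_closedBall, dist_comm, hg.dist_apply_left h0 (min_le_right _ _)]
    exact min_le_right _ _

lemma isChain_of_dist_succ_le {z : ℕ → Z} (hz : ∀ i, dist (z i) (z (i + 1)) ≤ c) {i i' : ℕ}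
    (hii' : i ≤ i') (hP : ∀ j ∈ Set.Icc i i', z j ∈ P) :
    IsChain c P (fun j => z (i + j)) (i' - i) (z i) (z i') where
  apply_zero := rfl
  apply_last := by rw [Nat.add_sub_cancel' hii']
  dist_succ_le j _ := hz (i + j)
  mem j hj := hP _ ⟨by omega, by omega⟩

/-- Induction on `k`: by slimness of the triangle `x, y, Γ (N / 2)`, the point `w` is
`3δ`-close to a point of `[x, Γ (N / 2)]` or of `[y, Γ (N / 2)]`, and either half of the chain
has at most `2 ^ k` steps. -/
lemma IsChain.exists_dist_le {δ : ℝ} (hyp : DeltaHypSpace Z δ)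
    (hgeo : IsGeodesicSpace Z) (hc : 0 ≤ c) {w : Z} (k : ℕ) (hN : N ≤ 2 ^ k)
    (hΓ : IsChain c P Γ N x y) (hw : dist x w + dist w y = dist x y) :
    ∃ j ≤ N, dist w (Γ j) ≤ 3 * δ * k + c := by
  induction k generalizing N Γ x y w with
  | zero =>
    refine ⟨0, Nat.zero_le _, ?_⟩
    rw [hΓ.apply_zero, dist_comm, Nat.cast_zero, mul_zero, zero_add]
    have hxy : dist x y ≤ c := by
      interval_cases N
      · rw [← hΓ.apply_zero, ← hΓ.apply_last, dist_self]
        exact hc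
      · simpa [hΓ.apply_zero, hΓ.apply_last] using hΓ.dist_succ_le 0 one_pos
    linarith [dist_nonneg (x := w) (y := y)]
  | succ k ih =>
    set m := N / 2
    obtain ⟨γ₁, hγ₁⟩ := hgeo x (Γ m)
    obtain ⟨γ₂, hγ₂⟩ := hgeo y (Γ m)
    have hcast : 3 * δ * k + c + 3 * δ = 3 * δ * ((k + 1 : ℕ) : ℝ) + c := by push_cast; ring
    rcases hyp.slim_triangle hw hγ₁ hγ₂ with ⟨r, ⟨hr0, hr1⟩, hr⟩ | ⟨r, ⟨hr0, hr1⟩, hr⟩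
    · have hΓ₁ : IsChain c P Γ m x (Γ m) := hΓ.take (Nat.div_le_self N 2)
      obtain ⟨j, hj, hjr⟩ := ih (by omega) hΓ₁ (hγ₁.dist_add_dist hr0 hr1)
      refine ⟨j, hj.trans (Nat.div_le_self N 2), ?_⟩
      linarith [dist_triangle w (γ₁ r) (Γ j)]
    · have hΓ₂ : IsChain c P (fun j => Γ (N - j)) (N - m) y (Γ m) := by
        have h := hΓ.reverse.take (Nat.sub_le N m)
        rwa [Nat.sub_sub_self (Nat.div_le_self N 2)] at h
      obtain ⟨j, hj, hjr⟩ := ih (by omega) hΓ₂ (hγ₂.dist_add_dist hr0 hr1)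
      refine ⟨N - j, Nat.sub_le N j, ?_⟩
      linarith [dist_triangle w (γ₂ r) (Γ (N - j))]

end Chains

section MorseLemma

/-- From `log y ≤ y / M - 1 + log M` with `M = 2ab`, which absorbs half of `D`. -/
lemma le_of_le_mul_log_add {a b c e D : ℝ} (ha : 0 < a) (hb : 0 < b) (hy : 0 < b * D + c)
    (h : D ≤ a * Real.log (b * D + c) + e) :
    D ≤ c / b + 2 * a * Real.log (2 * a * b) + 2 * e := by
  have hM : 0 < 2 * a * b := by positivity
  have hlog := Real.log_le_sub_one_of_pos (div_pos hy hM)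
  rw [Real.log_div hy.ne' hM.ne'] at hlog
  have key : a * ((b * D + c) / (2 * a * b)) = D / 2 + c / (2 * b) := by
    field_simp
  have := mul_le_mul_of_nonneg_left hlog ha.le
  rw [mul_sub, mul_sub, key, mul_one] at this
  have hcb : c / (2 * b) = c / b / 2 := by rw [div_div, mul_comm b]
  linarith

/-- The bound of `le_of_le_mul_log_add` for `a = 3δ / log 2 + 1`, `b = 6K + 2`, `c = K² + 3`
and `e = 3δ + 2K`. -/
def morseConst (δ K : ℝ) : ℝ :=
  (K ^ 2 + 3) / (6 * K + 2) +
    2 * (3 * δ / Real.log 2 + 1) * Real.log (2 * (3 * δ / Real.log 2 + 1) * (6 * K + 2)) +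
    2 * (3 * δ + 2 * K)

def qgeodSamples {Z : Type} (L : ℝ) (α : ℝ → Z) : Set Z :=
  (fun i : ℕ => α (min i L)) '' Set.Iic ⌈L⌉₊

lemma qgeodSamples_nonempty {Z : Type} (L : ℝ) (α : ℝ → Z) : (qgeodSamples L α).Nonempty :=
  ⟨_, 0, Set.mem_Iic.mpr (Nat.zero_le _), rfl⟩

variable {Z : Type} [MetricSpace Z] {δ K : ℝ}

lemma isCompact_qgeodSamples (L : ℝ) (α : ℝ → Z) : IsCompact (qgeodSamples L α) :=
  ((Set.finite_Iic _).image _).isCompact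

/-- A chain avoiding the `D`-ball around a point of `[y₁, y₂]` has at least about
`2 ^ (D / 3δ)` steps, so a bound on its length that is linear in `D` bounds `D`. -/
lemma le_morseConst_of_isChain (hyp : DeltaHypSpace Z δ) (hgeo : IsGeodesicSpace Z)
    (hK : 1 ≤ K) {Γ : ℕ → Z} {N : ℕ} {w y₁ y₂ : Z} {D : ℝ} (hD : 0 ≤ D)
    (hΓ : IsChain (2 * K) {p | D ≤ dist w p} Γ N y₁ y₂)
    (hw : dist y₁ w + dist w y₂ = dist y₁ y₂) (hN : (N : ℝ) ≤ (6 * K + 2) * D + (K ^ 2 + 3)) :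
    D ≤ morseConst δ K := by
  obtain ⟨j, hj, hjw⟩ := hΓ.exists_dist_le hyp hgeo (by linarith) _
    (Nat.lt_pow_succ_log_self one_lt_two N).le hw
  have hfar : D ≤ dist w (Γ j) := hΓ.mem j hj
  have hδ := hyp.nonneg w
  have hlog2 : 0 < Real.log 2 := Real.log_pos one_lt_two
  have hy : 1 ≤ (6 * K + 2) * D + (K ^ 2 + 3) := by nlinarith
  have hlogN : Real.log N ≤ Real.log ((6 * K + 2) * D + (K ^ 2 + 3)) := by
    rcases N.eq_zero_or_pos with rfl | hN0
    · simpa using Real.log_nonneg hy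
    · exact Real.log_le_log (by exact_mod_cast hN0) hN
  have hE : 0 ≤ 3 * δ / Real.log 2 := by positivity
  have hNlog : 3 * δ * (Nat.log 2 N : ℝ) ≤ 3 * δ / Real.log 2 * Real.log N := by
    calc 3 * δ * (Nat.log 2 N : ℝ) ≤ 3 * δ * Real.logb 2 N := by
          exact_mod_cast mul_le_mul_of_nonneg_left (Real.natLog_le_logb N 2) (by positivity)
      _ = 3 * δ / Real.log 2 * Real.log N := by rw [Real.logb]; ring
  refine le_of_le_mul_log_add (by positivity) (by linarith) (by linarith) ?_
  push_cast at hjw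
  nlinarith [Real.log_nonneg hy, mul_le_mul_of_nonneg_left hlogN hE]

variable {L : ℝ} {x y : Z} {α : ℝ → Z}

lemma IsQGeodSeg.reverse (h : IsQGeodSeg K x y L α) :
    IsQGeodSeg K y x L (fun s => α (L - s)) := by
  obtain ⟨hL, h0, hL', hq⟩ := h
  refine ⟨hL, by simpa using hL', by simpa using h0, fun s t hs ht => ?_⟩
  have h := hq (L - s) (L - t) ⟨by linarith [hs.2], by linarith [hs.1]⟩
    ⟨by linarith [ht.2], by linarith [ht.1]⟩
  rwa [show L - s - (L - t) = -(s - t) by ring, abs_neg] at h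

lemma IsQGeodSeg.dist_sample_succ_le (h : IsQGeodSeg K x y L α) (hK : 0 ≤ K) (i : ℕ) :
    dist (α (min i L)) (α (min ((i + 1 : ℕ) : ℝ) L)) ≤ 2 * K := by
  obtain ⟨hL, -, -, hq⟩ := h
  have hΔ : |min (i : ℝ) L - min ((i + 1 : ℕ) : ℝ) L| ≤ 1 :=
    (abs_min_sub_min_le_max _ _ _ _).trans (by simp)
  refine (hq _ _ ⟨le_min (by positivity) hL, min_le_right _ _⟩
    ⟨le_min (by positivity) hL, min_le_right _ _⟩).2.trans ?_
  nlinarith [mul_le_mul_of_nonneg_left hΔ hK]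

lemma IsQGeodSeg.sub_le_dist_sample (h : IsQGeodSeg K x y L α) (hK : 0 < K) {i j : ℕ}
    (hj : j ≤ ⌈L⌉₊) :
    (j : ℝ) - i ≤ K * dist (α (min i L)) (α (min j L)) + K ^ 2 + 1 := by
  obtain ⟨hL, -, -, hq⟩ := h
  have hlow := (hq (min (i : ℝ) L) (min (j : ℝ) L) ⟨le_min (by positivity) hL, min_le_right _ _⟩
    ⟨le_min (by positivity) hL, min_le_right _ _⟩).1
  have hjL : (j : ℝ) - 1 ≤ min (j : ℝ) L := by
    have : (j : ℝ) < L + 1 := (Nat.cast_le.mpr hj).trans_lt (Nat.ceil_lt_add_one hL)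
    exact le_min (by linarith) (by linarith)
  have hiL : min (i : ℝ) L ≤ i := min_le_left _ _
  have hK' := mul_le_mul_of_nonneg_left hlow hK.le
  rw [mul_sub, ← mul_assoc, mul_one_div_cancel hK.ne', one_mul, abs_sub_comm] at hK'
  linarith [le_abs_self (min (j : ℝ) L - min (i : ℝ) L)]

lemma exists_mem_closedBall_subset {S : Set Z} (hS : IsCompact S) (hSne : S.Nonempty)
    {w y : Z} {D : ℝ} (hfar : ∀ s ∈ S, D ≤ dist w s) (hy : infDist y S ≤ D)
    (h : y ∈ S ∨ 2 * D ≤ dist w y) :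
    ∃ s ∈ S, dist y s ≤ D ∧ closedBall y (dist y s) ⊆ {p | D ≤ dist w p} := by
  rcases h with hyS | hwy
  · refine ⟨y, hyS, by simpa using (infDist_nonneg).trans hy, fun p hp => ?_⟩
    rw [dist_self, closedBall_zero, Set.mem_singleton_iff] at hp
    exact hp ▸ hfar y hyS
  · obtain ⟨s, hs, hys⟩ := hS.exists_infDist_eq_dist hSne y
    refine ⟨s, hs, hys ▸ hy, fun p hp => ?_⟩
    show D ≤ dist w p
    linarith [dist_triangle w p y, mem_closedBall.mp hp]

lemma exists_isChain_of_closedBall_subset (hgeo : IsGeodesicSpace Z) {c : ℝ} (hc : 0 < c)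
    {P : Set Z} {z : ℕ → Z} (hz : ∀ i, dist (z i) (z (i + 1)) ≤ c) {i₁ i₂ : ℕ} (hi : i₁ ≤ i₂)
    (hP : ∀ i ∈ Set.Icc i₁ i₂, z i ∈ P) {y₁ y₂ : Z}
    (h₁ : closedBall y₁ (dist y₁ (z i₁)) ⊆ P) (h₂ : closedBall y₂ (dist y₂ (z i₂)) ⊆ P) :
    ∃ Γ, IsChain c P Γ (⌈dist y₁ (z i₁) / c⌉₊ + (i₂ - i₁) + ⌈dist y₂ (z i₂) / c⌉₊) y₁ y₂ := by
  obtain ⟨g₁, hg₁⟩ := hgeo y₁ (z i₁)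
  obtain ⟨g₂, hg₂⟩ := hgeo y₂ (z i₂)
  exact ⟨_, ((isChain_of_isGeodSegTo hg₁ hc h₁).append (isChain_of_dist_succ_le hz hi hP)).append
    (isChain_of_isGeodSegTo hg₂ hc h₂).reverse⟩

/-- The two anchors `y₁, y₂` on either side of `w` are joined through their nearest sample
points by a `2K`-chain of `O(D)` steps that stays `D`-far from `w`. -/
lemma le_morseConst_of_anchors (hyp : DeltaHypSpace Z δ) (hgeo : IsGeodesicSpace Z)
    (hK : 1 ≤ K) (hα : IsQGeodSeg K x y L α) {w y₁ y₂ : Z} {D : ℝ} (hD : 0 ≤ D)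
    (hfar : ∀ i ≤ ⌈L⌉₊, D ≤ dist w (α (min i L)))
    (hw : dist y₁ w + dist w y₂ = dist y₁ y₂) (h₁₂ : dist y₁ y₂ ≤ 4 * D) {i₁ i₂ : ℕ}
    (hi₁ : i₁ ≤ ⌈L⌉₊) (hi₂ : i₂ ≤ ⌈L⌉₊)
    (hy₁ : dist y₁ (α (min i₁ L)) ≤ D) (hy₂ : dist y₂ (α (min i₂ L)) ≤ D)
    (hb₁ : closedBall y₁ (dist y₁ (α (min i₁ L))) ⊆ {p | D ≤ dist w p})
    (hb₂ : closedBall y₂ (dist y₂ (α (min i₂ L))) ⊆ {p | D ≤ dist w p}) :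
    D ≤ morseConst δ K := by
  wlog hi : i₁ ≤ i₂ generalizing y₁ y₂ i₁ i₂
  · exact this (by rw [dist_comm y₂ w, dist_comm w y₁, dist_comm y₂ y₁]; linarith)
      (by rwa [dist_comm]) hi₂ hi₁ hy₂ hy₁ hb₂ hb₁ (by omega)
  have hK0 : 0 < K := by linarith
  obtain ⟨Γ, hΓ⟩ := exists_isChain_of_closedBall_subset hgeo (by linarith : (0 : ℝ) < 2 * K)
    (hα.dist_sample_succ_le hK0.le) hi (fun i hi => hfar i (hi.2.trans hi₂)) hb₁ hb₂
  refine le_morseConst_of_isChain hyp hgeo hK hD hΓ hw ?_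
  have hceil : ∀ r, 0 ≤ r → r ≤ D → (⌈r / (2 * K)⌉₊ : ℝ) ≤ D + 1 := fun r hr hrD =>
    (Nat.ceil_lt_add_one (by positivity)).le.trans
      (by linarith [div_le_self hr (by linarith : (1 : ℝ) ≤ 2 * K)])
  have hsamples : dist (α (min i₁ L)) (α (min i₂ L)) ≤ 6 * D := by
    linarith [dist_triangle4 (α (min i₁ L)) y₁ y₂ (α (min i₂ L)), dist_comm (α (min i₁ L)) y₁]
  have hlen := hα.sub_le_dist_sample (i := i₁) hK0 hi₂
  push_cast [hi]
  linarith [hceil _ dist_nonneg hy₁, hceil _ dist_nonneg hy₂,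
    mul_le_mul_of_nonneg_left hsamples hK0.le]

/-- For the point `σ ts` of `[x, y]` farthest (at distance `D`) from the samples of `α`, the
points `y₁, y₂` of `[x, y]` at distance `2D` from it on either side (or the endpoints, which
are samples) are anchors for `le_morseConst_of_anchors`. -/
lemma IsQGeodSeg.infDist_le_morseConst (hyp : DeltaHypSpace Z δ)
    (hgeo : IsGeodesicSpace Z) (hK : 1 ≤ K) (hα : IsQGeodSeg K x y L α) {σ : ℝ → Z}
    (hσ : IsGeodSegTo x y σ) {ts : ℝ} (hts : ts ∈ Set.Icc 0 (dist x y))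
    (hmax : ∀ r ∈ Set.Icc 0 (dist x y),
      infDist (σ r) (qgeodSamples L α) ≤ infDist (σ ts) (qgeodSamples L α)) :
    infDist (σ ts) (qgeodSamples L α) ≤ morseConst δ K := by
  set S := qgeodSamples L α
  set D := infDist (σ ts) S
  have hD0 : 0 ≤ D := infDist_nonneg
  have hfar : ∀ s ∈ S, D ≤ dist (σ ts) s := fun s hs => infDist_le_dist_of_mem hs
  have hx : σ 0 ∈ S := ⟨0, Set.mem_Iic.mpr (Nat.zero_le _), by simp [hα.1, hα.2.1, hσ.1]⟩
  have hy : σ (dist x y) ∈ S := ⟨⌈L⌉₊, Set.mem_Iic.mpr le_rfl,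
    by simp [min_eq_right (Nat.le_ceil L), hα.2.2.1, hσ.apply_dist]⟩
  set a := max (ts - 2 * D) 0
  set c := min (ts + 2 * D) (dist x y)
  have ha : a ∈ Set.Icc 0 (dist x y) := ⟨le_max_right _ _, max_le (by linarith [hts.2]) dist_nonneg⟩
  have hc : c ∈ Set.Icc 0 (dist x y) := ⟨le_min (by linarith [hts.1]) dist_nonneg, min_le_right _ _⟩
  have hats : a ≤ ts := max_le (by linarith) hts.1
  have htsc : ts ≤ c := le_min (by linarith) hts.2
  have hanchor₁ : σ a ∈ S ∨ 2 * D ≤ dist (σ ts) (σ a) := by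
    rcases max_cases (ts - 2 * D) 0 with ⟨h, -⟩ | ⟨h, -⟩
    · rw [hσ.dist_apply_apply hts ha, show a = ts - 2 * D from h, abs_of_nonneg (by linarith)]
      exact Or.inr (by linarith)
    · rw [show a = 0 from h]
      exact Or.inl hx
  have hanchor₂ : σ c ∈ S ∨ 2 * D ≤ dist (σ ts) (σ c) := by
    rcases min_cases (ts + 2 * D) (dist x y) with ⟨h, -⟩ | ⟨h, -⟩
    · rw [hσ.dist_apply_apply hts hc, show c = ts + 2 * D from h, abs_of_nonpos (by linarith)]
      exact Or.inr (by linarith)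
    · rw [show c = dist x y from h]
      exact Or.inl hy
  obtain ⟨_, ⟨i₁, hi₁, rfl⟩, hy₁, hb₁⟩ := exists_mem_closedBall_subset
    (isCompact_qgeodSamples L α) (qgeodSamples_nonempty L α) hfar (hmax a ha) hanchor₁
  obtain ⟨_, ⟨i₂, hi₂, rfl⟩, hy₂, hb₂⟩ := exists_mem_closedBall_subset
    (isCompact_qgeodSamples L α) (qgeodSamples_nonempty L α) hfar (hmax c hc) hanchor₂
  refine le_morseConst_of_anchors hyp hgeo hK hα hD0
    (fun i hi => hfar _ ⟨i, hi, rfl⟩) (hσ.dist_add_dist_of_le ha hts hc hats htsc) ?_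
    hi₁ hi₂ hy₁ hy₂ hb₁ hb₂
  rw [hσ.dist_apply_apply ha hc, abs_sub_comm, abs_of_nonneg (by linarith)]
  linarith [min_le_left (ts + 2 * D) (dist x y), le_max_left (ts - 2 * D) 0]

/-- One half of the Morse lemma. -/
lemma IsQGeodSeg.exists_dist_le_morseConst (hyp : DeltaHypSpace Z δ)
    (hgeo : IsGeodesicSpace Z) (hK : 1 ≤ K) (hα : IsQGeodSeg K x y L α) {σ : ℝ → Z}
    (hσ : IsGeodSegTo x y σ) {t : ℝ} (ht : t ∈ Set.Icc 0 (dist x y)) :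
    ∃ s ∈ Set.Icc 0 L, dist (σ t) (α s) ≤ morseConst δ K := by
  have hσc : ContinuousOn σ (Set.Icc 0 (dist x y)) :=
    (LipschitzOnWith.of_dist_le_mul fun r hr r' hr' => by
      rw [NNReal.coe_one, one_mul, Real.dist_eq]
      exact hσ.dist_le hr.1 hr'.1).continuousOn
  obtain ⟨ts, hts, hmax⟩ := isCompact_Icc.exists_isMaxOn (Set.nonempty_Icc.2 dist_nonneg)
    ((continuous_infDist_pt (qgeodSamples L α)).comp_continuousOn hσc)
  obtain ⟨_, ⟨i, -, rfl⟩, hi⟩ := (isCompact_qgeodSamples L α).exists_infDist_eq_dist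
    (qgeodSamples_nonempty L α) (σ t)
  refine ⟨min i L, ⟨le_min i.cast_nonneg hα.1, min_le_right _ _⟩, ?_⟩
  rw [← hi]
  exact (hmax ht).trans (hα.infDist_le_morseConst hyp hgeo hK hσ hts fun r hr => hmax hr)

/-- `σ t` is too far from `b` to be `3δ`-close to `[b, x]`, so it is `3δ`-close to `[y, x]`, to
which the Morse lemma applies. -/
lemma IsQGeodSeg.exists_dist_le_of_isGeodSegTo (hyp : DeltaHypSpace Z δ)
    (hgeo : IsGeodesicSpace Z) (hK : 1 ≤ K) (hα : IsQGeodSeg K x y L α) {b : Z} {σ : ℝ → Z}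
    (hσ : IsGeodSegTo b y σ) {t : ℝ} (ht : t ∈ Set.Icc 0 (dist b y))
    (hxt : dist b x + 3 * δ < t) {z : Z} {ε : ℝ} (hz : dist (σ t) z ≤ ε) :
    ∃ s ∈ Set.Icc 0 L, dist (α s) z ≤ 3 * δ + morseConst δ K + ε := by
  obtain ⟨γ₁, hγ₁⟩ := hgeo b x
  obtain ⟨γ₂, hγ₂⟩ := hgeo y x
  rcases hyp.slim_triangle (hσ.dist_add_dist ht.1 ht.2) hγ₁ hγ₂ with
    ⟨r, hr, hr'⟩ | ⟨r, hr, hr'⟩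
  · linarith [hγ₁.dist_apply_left hr.1 hr.2, hσ.dist_apply_left ht.1 ht.2,
      dist_triangle b (γ₁ r) (σ t), dist_comm (γ₁ r) (σ t), hr.2]
  · obtain ⟨s, hs, hs'⟩ := hα.reverse.exists_dist_le_morseConst hyp hgeo hK hγ₂ hr
    exact ⟨L - s, ⟨by linarith [hs.2], by linarith [hs.1]⟩,
      by linarith [dist_triangle4 (α (L - s)) (γ₂ r) (σ t) z, dist_comm (α (L - s)) (γ₂ r),
        dist_comm (γ₂ r) (σ t)]⟩

end MorseLemma

section Boundary

variable {Z : Type} [MetricSpace Z] {δ : ℝ} {b : Z}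

lemma rayClose_equivalence (b : Z) :
    Equivalence (fun ρ₁ ρ₂ : RaysFrom b => rayClose ρ₁.1 ρ₂.1) where
  refl _ := ne_of_eq_of_ne hausdorffEDist_self ENNReal.zero_ne_top
  symm h := ne_of_eq_of_ne hausdorffEDist_comm h
  trans h₁ h₂ :=
    ne_top_of_le_ne_top (ENNReal.add_ne_top.mpr ⟨h₁, h₂⟩) hausdorffEDist_triangle

lemma rayClose_of_rayPt_eq {ρ₁ ρ₂ : RaysFrom b} (h : rayPt ρ₁ = rayPt ρ₂) :
    rayClose ρ₁.1 ρ₂.1 :=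
  (rayClose_equivalence b).eqvGen_iff.mp (Quot.eqvGen_exact h)

lemma rayClose.exists_dist_le {ρ₁ ρ₂ : ℝ → Z} (h : rayClose ρ₁ ρ₂) :
    ∃ C, ∀ t, 0 ≤ t → ∃ s, 0 ≤ s ∧ dist (ρ₁ t) (ρ₂ s) ≤ C := by
  refine ⟨(hausdorffEDist (ρ₁ '' Set.Ici 0) (ρ₂ '' Set.Ici 0) + 1).toReal, fun t ht => ?_⟩
  obtain ⟨_, ⟨s, hs, rfl⟩, hts⟩ := infEDist_lt_iff.mp <|
    (infEDist_le_hausdorffEDist_of_mem (t := ρ₂ '' Set.Ici 0)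
      (show ρ₁ t ∈ ρ₁ '' Set.Ici 0 from ⟨t, ht, rfl⟩)).trans_lt
      (ENNReal.lt_add_right h one_ne_zero)
  exact ⟨s, hs, by
    rw [dist_edist]
    exact ENNReal.toReal_mono (ENNReal.add_ne_top.mpr ⟨h, ENNReal.one_ne_top⟩) hts.le⟩

lemma rayClose_of_dist_le {ρ₁ ρ₂ : ℝ → Z} {C : ℝ} (h : ∀ t, 0 ≤ t → dist (ρ₁ t) (ρ₂ t) ≤ C) :
    rayClose ρ₁ ρ₂ := by
  refine ne_top_of_le_ne_top (ENNReal.ofReal_ne_top (r := C))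
    (hausdorffEDist_le_of_mem_edist ?_ ?_)
  · rintro _ ⟨t, ht, rfl⟩
    exact ⟨ρ₂ t, ⟨t, ht, rfl⟩, by rw [edist_dist]; exact ENNReal.ofReal_le_ofReal (h t ht)⟩
  · rintro _ ⟨t, ht, rfl⟩
    exact ⟨ρ₁ t, ⟨t, ht, rfl⟩, by
      rw [edist_dist, dist_comm]; exact ENNReal.ofReal_le_ofReal (h t ht)⟩

lemma IsRayFrom.dist_add_dist {ρ : ℝ → Z} (h : IsRayFrom b ρ) {s t : ℝ} (hs : 0 ≤ s)
    (hst : s ≤ t) : dist b (ρ s) + dist (ρ s) (ρ t) = dist b (ρ t) := by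
  rw [h.dist_apply hs, h.dist_apply (hs.trans hst), h.2 s t hs (hs.trans hst),
    abs_of_nonpos (by linarith)]
  ring

/-- In the triangle `b, ρ₁ T, ρ₂ s` with `T` large, `ρ₁ t` cannot be near the short side
`[ρ₁ T, ρ₂ s]`, so it is `3δ`-close to `[b, ρ₂ s]`. -/
lemma IsRayFrom.dist_le_of_forall_exists_dist_le (hyp : DeltaHypSpace Z δ)
    (hgeo : IsGeodesicSpace Z) {ρ₁ ρ₂ : ℝ → Z} (h₁ : IsRayFrom b ρ₁) (h₂ : IsRayFrom b ρ₂)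
    {C : ℝ} (h : ∀ t, 0 ≤ t → ∃ s, 0 ≤ s ∧ dist (ρ₁ t) (ρ₂ s) ≤ C) {t : ℝ} (ht : 0 ≤ t) :
    dist (ρ₁ t) (ρ₂ t) ≤ 6 * δ := by
  have hC : 0 ≤ C := by obtain ⟨s, -, hs⟩ := h 0 le_rfl; exact dist_nonneg.trans hs
  have hδ := hyp.nonneg b
  set T := t + C + 3 * δ + 2
  obtain ⟨s, hs0, hsT⟩ := h T (by positivity)
  obtain ⟨γ, hγ⟩ := hgeo (ρ₁ T) (ρ₂ s)
  rcases hyp.slim_triangle (h₁.dist_add_dist ht (by linarith)) (h₂.isGeodSegTo hs0) hγ with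
    ⟨r, ⟨hr0, hr1⟩, hr⟩ | ⟨r, ⟨hr0, hr1⟩, hr⟩
  · rw [h₂.dist_apply hs0] at hr1
    rw [min_eq_left hr1] at hr
    have hrt : |r - t| ≤ 3 * δ := by
      rw [abs_le]
      constructor <;> linarith [dist_triangle b (ρ₁ t) (ρ₂ r), dist_triangle b (ρ₂ r) (ρ₁ t),
        h₁.dist_apply ht, h₂.dist_apply hr0, dist_comm (ρ₂ r) (ρ₁ t)]
    linarith [dist_triangle (ρ₁ t) (ρ₂ r) (ρ₂ t), h₂.2 r t hr0 ht]
  · linarith [dist_triangle b (γ r) (ρ₁ T), dist_triangle b (ρ₁ t) (γ r),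
      h₁.dist_apply (by positivity : 0 ≤ T), h₁.dist_apply ht, hγ.dist_apply_left hr0 hr1,
      dist_comm (γ r) (ρ₁ T)]

end Boundary

section Convergence

variable {Z : Type} [MetricSpace Z] {δ : ℝ} {b : Z}

lemma UCC.comp {γ : ℕ → ℝ → Z} {ρ : ℝ → Z} (h : UCC γ ρ) {ψ : ℕ → ℕ} (hψ : StrictMono ψ) :
    UCC (fun k => γ (ψ k)) ρ := fun M ε hε =>
  let ⟨N, hN⟩ := h M ε hε
  ⟨N, fun n hn => hN (ψ n) (hn.trans hψ.le_apply)⟩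

lemma UCC.eventually_le_dist_and_dist_le {u : ℕ → Z} {γ : ℕ → ℝ → Z} {ρ : ℝ → Z}
    (hγ : ∀ n, IsGeodSegTo b (u n) (γ n)) (hρ : IsRayFrom b ρ) (h : UCC γ ρ) {T : ℝ}
    (hT : 0 ≤ T) : ∀ᶠ n in atTop, T ≤ dist b (u n) ∧ dist (γ n T) (ρ T) ≤ 1 := by
  obtain ⟨N, hN⟩ := h (T + 2) 1 one_pos
  filter_upwards [eventually_ge_atTop N] with n hn
  refine ⟨le_of_not_gt fun hlt => ?_, hN n hn T hT (by linarith)⟩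
  have hend := hN n hn (T + 2) (by linarith) le_rfl
  rw [(hγ n).2.1 _ (by linarith)] at hend
  linarith [dist_triangle b (u n) (ρ (T + 2)), hρ.dist_apply (by linarith : 0 ≤ T + 2)]

lemma exists_subseq_tendstoUniformlyOn_of_lipschitzWith [ProperSpace Z] (b : Z)
    (f : ℕ → ℝ≥0 → Z) (hf0 : ∀ k, f k 0 = b) (hf : ∀ k, LipschitzWith 1 (f k)) :
    ∃ g : ℝ≥0 → Z, ∃ ψ : ℕ → ℕ, StrictMono ψ ∧
      ∀ K, IsCompact K → TendstoUniformlyOn (fun k => f (ψ k)) g atTop K := by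
  set S : Set C(ℝ≥0, Z) := {F | F 0 = b ∧ LipschitzWith 1 F}
  have hS : IsCompact S := by
    refine ArzelaAscoli.isCompact_of_equicontinuous S ?_
      (LipschitzWith.uniformEquicontinuous _ 1 fun F : S => F.2.2).equicontinuous
    have hball : ContinuousMap.toFun '' S ⊆ Set.univ.pi fun t => closedBall b t := by
      rintro _ ⟨F, ⟨hF0, hF⟩, rfl⟩ t -
      have h := hF.dist_le_mul t 0
      rwa [hF0, NNReal.coe_one, one_mul, NNReal.dist_eq, NNReal.coe_zero, sub_zero,
        NNReal.abs_eq] at h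
    refine (isCompact_univ_pi fun t : ℝ≥0 => isCompact_closedBall b (t : ℝ)).of_isClosed_subset
      ?_ hball
    have : ContinuousMap.toFun '' S = {F : ℝ≥0 → Z | F 0 = b} ∩ {F | LipschitzWith 1 F} := by
      ext F
      refine ⟨?_, fun hF => ⟨⟨F, hF.2.continuous⟩, hF, rfl⟩⟩
      rintro ⟨F, hF, rfl⟩
      exact hF
    rw [this]
    exact (isClosed_eq (continuous_apply 0) continuous_const).inter
      (isClosed_setOfPred_lipschitzWith 1)
  obtain ⟨g, -, ψ, hψ, h⟩ :=
    hS.tendsto_subseq (x := fun k => ⟨f k, (hf k).continuous⟩) fun k => ⟨hf0 k, hf k⟩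
  exact ⟨g, ψ, hψ, ContinuousMap.tendsto_iff_forall_isCompact_tendstoUniformlyOn.mp h⟩

lemma exists_subseq_UCC_isRayFrom [ProperSpace Z] {w : ℕ → Z} {η : ℕ → ℝ → Z}
    (hη : ∀ k, IsGeodSegTo b (w k) (η k)) (hw : Tendsto (fun k => dist b (w k)) atTop atTop) :
    ∃ ψ : ℕ → ℕ, StrictMono ψ ∧ ∃ ρ : ℝ → Z, IsRayFrom b ρ ∧ UCC (fun k => η (ψ k)) ρ := by
  have hlip : ∀ k, LipschitzWith 1 (fun t : ℝ≥0 => η k t) := fun k =>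
    LipschitzWith.of_dist_le_mul fun s t => by
      rw [NNReal.coe_one, one_mul, NNReal.dist_eq]
      exact (hη k).dist_le s.2 t.2
  obtain ⟨g, ψ, hψ, hg⟩ :=
    exists_subseq_tendstoUniformlyOn_of_lipschitzWith b _ (fun k => (hη k).1) hlip
  have hpt : ∀ t : ℝ≥0, Tendsto (fun k => η (ψ k) t) atTop (𝓝 (g t)) := fun t =>
    (hg {t} isCompact_singleton).tendsto_at rfl
  refine ⟨ψ, hψ, fun t => g t.toNNReal, ⟨?_, fun s t hs ht => ?_⟩, fun M ε hε => ?_⟩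
  · have h0 := hpt 0
    simp only [NNReal.coe_zero, (hη _).1] at h0
    show g (Real.toNNReal 0) = b
    rw [Real.toNNReal_zero]
    exact tendsto_nhds_unique h0 tendsto_const_nhds
  · have hlim := (hpt s.toNNReal).dist (hpt t.toNNReal)
    simp only [Real.coe_toNNReal _ hs, Real.coe_toNNReal _ ht] at hlim
    refine tendsto_nhds_unique hlim (tendsto_const_nhds.congr' ?_)
    filter_upwards [(hw.comp hψ.tendsto_atTop).eventually_ge_atTop (max s t)] with k hk
    exact ((hη (ψ k)).2.2 s t hs ((le_max_left s t).trans hk) ht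
      ((le_max_right s t).trans hk)).symm
  · obtain ⟨N, hN⟩ := eventually_atTop.mp (Metric.tendstoUniformlyOn_iff.mp
      (hg _ (isCompact_Icc (a := 0) (b := M.toNNReal))) ε hε)
    refine ⟨N, fun n hn t ht htM => ?_⟩
    have h := hN n hn t.toNNReal ⟨zero_le, Real.toNNReal_le_toNNReal htM⟩
    rw [Real.coe_toNNReal _ ht, dist_comm] at h
    exact h.le

lemma IsRayFrom.exists_dist_le_of_isGeodSegTo (hyp : DeltaHypSpace Z δ)
    (hgeo : IsGeodesicSpace Z) {ρ : ℝ → Z} (hρ : IsRayFrom b ρ) {w : Z} {η : ℝ → Z}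
    (hη : IsGeodSegTo b w η) {T C : ℝ} (hT : 0 ≤ T) (hw : dist w (ρ T) ≤ C) {t : ℝ}
    (ht : 0 ≤ t) : ∃ s, 0 ≤ s ∧ dist (η t) (ρ s) ≤ 3 * δ + C := by
  have hδ := hyp.nonneg b
  have hC : 0 ≤ C := dist_nonneg.trans hw
  rcases le_or_gt (dist b w) t with hwt | htw
  · exact ⟨T, hT, by rw [hη.2.1 t hwt]; linarith⟩
  obtain ⟨γ, hγ⟩ := hgeo w (ρ T)
  rcases hyp.slim_triangle (hη.dist_add_dist ht htw.le) (hρ.isGeodSegTo hT) hγ with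
    ⟨r, ⟨hr0, -⟩, hr⟩ | ⟨r, ⟨hr0, hr1⟩, hr⟩
  · exact ⟨min r T, le_min hr0 hT, by linarith⟩
  · refine ⟨T, hT, ?_⟩
    linarith [dist_triangle (η t) (γ r) (ρ T), hγ.dist_apply_right hr0 hr1]

lemma seqConvTo_of_dist_le [ProperSpace Z] (hyp : DeltaHypSpace Z δ) (hgeo : IsGeodesicSpace Z)
    (ρ : RaysFrom b) {w : ℕ → Z} {T : ℕ → ℝ} (hT0 : ∀ k, 0 ≤ T k) (hT : Tendsto T atTop atTop)
    {C : ℝ} (hw : ∀ k, dist (w k) (ρ.1 (T k)) ≤ C) : SeqConvTo b w (rayPt ρ) := by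
  intro η hη φ hφ
  have hdist : Tendsto (fun k => dist b (w (φ k))) atTop atTop :=
    tendsto_atTop_mono (fun k => show T (φ k) + -C ≤ _ by
        linarith [dist_triangle b (w (φ k)) (ρ.1 (T (φ k))), ρ.2.dist_apply (hT0 (φ k)), hw (φ k)])
      (tendsto_atTop_add_const_right _ (-C) (hT.comp hφ.tendsto_atTop))
  obtain ⟨ψ, hψ, ρ', hρ', hUCC⟩ := exists_subseq_UCC_isRayFrom (fun k => hη (φ k)) hdist
  refine ⟨ψ, hψ, ⟨ρ', hρ'⟩, hUCC, Quot.sound <| rayClose_of_dist_le fun t ht =>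
    hρ'.dist_le_of_forall_exists_dist_le hyp hgeo ρ.2 (C := 3 * δ + C + 1) (fun t ht => ?_) ht⟩
  obtain ⟨N, hN⟩ := hUCC t 1 one_pos
  obtain ⟨s, hs, hst⟩ :=
    ρ.2.exists_dist_le_of_isGeodSegTo hyp hgeo (hη (φ (ψ N))) (hT0 _) (hw _) ht
  have hNt : dist (η (φ (ψ N)) t) (ρ' t) ≤ 1 := hN N le_rfl t ht le_rfl
  refine ⟨s, hs, ?_⟩
  linarith [dist_triangle (ρ' t) (η (φ (ψ N)) t) (ρ.1 s), dist_comm (ρ' t) (η (φ (ψ N)) t)]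

end Convergence

/-- Let `Z` be a proper geodesic `δ`-hyperbolic space, `K ≥ 1`, and
`{xₙ}`, `{yₙ}` sequences with `lim xₙ = lim yₙ = ξ ∈ ∂Z`, where `xₙ` is joined to `x₁`
and `yₙ` to `y₁` by `K`-quasi-geodesics `αₙ`, `βₙ`.  Then there is a constant `D`
depending only on `δ`, `d(x₁, y₁)` and `K`, a subsequence, and points `pₙ ∈ αₙ`,
`qₙ ∈ βₙ` with `d(pₙ, qₙ) ≤ D` and `lim pₙ = lim qₙ = ξ`. -/
theorem quasigeodesics_to_common_boundary_point :
    ∃ D : ℝ → ℝ → ℝ → ℝ,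
      ∀ (Z : Type) [inst : MetricSpace Z] [inst2 : @ProperSpace Z
          (@MetricSpace.toPseudoMetricSpace Z inst)],
        IsGeodesicSpace Z →
        ∀ δ : ℝ, 0 ≤ δ → DeltaHypSpace Z δ →
        ∀ K : ℝ, 1 ≤ K →
        ∀ (b : Z) (u v : ℕ → Z) (ξ : RBdry b),
          SeqConvTo b u ξ → SeqConvTo b v ξ →
        ∀ (γ g : ℕ → ℝ → Z) (L L' : ℕ → ℝ),
          (∀ n, IsQGeodSeg K (u 0) (u n) (L n) (γ n)) →
          (∀ n, IsQGeodSeg K (v 0) (v n) (L' n) (g n)) →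
        ∃ φ : ℕ → ℕ, StrictMono φ ∧
          ∃ p q : ℕ → ℝ,
            (∀ k, p k ∈ Set.Icc 0 (L (φ k))) ∧
            (∀ k, q k ∈ Set.Icc 0 (L' (φ k))) ∧
            (∀ k, dist (γ (φ k) (p k)) (g (φ k) (q k)) ≤ D δ (dist (u 0) (v 0)) K) ∧
            SeqConvTo b (fun k => γ (φ k) (p k)) ξ ∧
            SeqConvTo b (fun k => g (φ k) (q k)) ξ := by
  refine ⟨fun δ _ K => 12 * δ + 2 * morseConst δ K + 2, ?_⟩
  intro Z _ _ hgeo δ _ hyp K hK b u v ξ hu hv γ g L L' hγ hg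
  choose σ hσ using fun n => hgeo b (u n)
  choose τ hτ using fun n => hgeo b (v n)
  obtain ⟨ψ₁, hψ₁, ρ, hσρ, rfl⟩ := hu σ hσ id strictMono_id
  dsimp only [id] at hσρ
  obtain ⟨ψ₂, hψ₂, ρ', hτρ', hρ'⟩ := hv τ hτ ψ₁ hψ₁
  obtain ⟨C, hC⟩ := (rayClose_of_rayPt_eq hρ'.symm).exists_dist_le
  set T : ℕ → ℝ := fun k => dist b (u 0) + dist b (v 0) + 3 * δ + 1 + k
  have hT0 : ∀ k, 0 ≤ T k := fun k => by positivity
  have hT : Tendsto T atTop atTop := tendsto_atTop_add_const_left _ _ tendsto_natCast_atTop_atTop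
  obtain ⟨φ, hφ, hgood⟩ := extraction_forall_of_eventually fun k =>
    ((hσρ.comp hψ₂).eventually_le_dist_and_dist_le (fun n => hσ _) ρ.2 (hT0 k)).and
      (hτρ'.eventually_le_dist_and_dist_le (fun n => hτ _) ρ'.2 (hT0 k))
  set n : ℕ → ℕ := fun k => ψ₁ (ψ₂ (φ k))
  choose p hp hpρ using fun k => (hγ (n k)).exists_dist_le_of_isGeodSegTo hyp hgeo hK
    (hσ _) ⟨hT0 k, (hgood k).1.1⟩ (by simp only [T]; linarith [dist_nonneg (x := b) (y := v 0)])
    (hgood k).1.2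
  choose q hq hqρ' using fun k => (hg (n k)).exists_dist_le_of_isGeodSegTo hyp hgeo hK
    (hτ _) ⟨hT0 k, (hgood k).2.1⟩ (by simp only [T]; linarith [dist_nonneg (x := b) (y := u 0)])
    (hgood k).2.2
  -- `p k` and `q k` are `(3δ + morseConst δ K + 1)`-close to `ρ (T k)` and `ρ' (T k)`, which
  -- are `6δ`-close to each other
  refine ⟨n, hψ₁.comp (hψ₂.comp hφ), p, q, hp, hq, fun k => ?_,
    seqConvTo_of_dist_le hyp hgeo ρ hT0 hT hpρ, hρ' ▸ seqConvTo_of_dist_le hyp hgeo ρ' hT0 hT hqρ'⟩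
  show _ ≤ 12 * δ + 2 * morseConst δ K + 2
  linarith [dist_triangle4 (γ (n k) (p k)) (ρ.1 (T k)) (ρ'.1 (T k)) (g (n k) (q k)), hpρ k,
    hqρ' k, dist_comm (ρ'.1 (T k)) (g (n k) (q k)),
    ρ.2.dist_le_of_forall_exists_dist_le hyp hgeo ρ'.2 hC (hT0 k)]

end LIP
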